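/- arXiv:1911.05581 — 2 statements merged into one kernel-verified Lean document; each statement's English description precedes it below -/
import Mathlib

section
/- (Chen–Stein method.) Let I be a finite index set and let (X_t)_{t∈I} and (X'_t)_{t∈I} be two {0,1}-valued processes such that X_t has the same distribution as X'_t for every t ∈ I and (X'_t) is an independent Bernoulli process. For each t ∈ I choose a neighbourhood B_t ⊆ I with t ∈ B_t. Write p_t = P(X_t = 1), p_{rs} = P(X_r = 1, X_s = 1), and set b_1 = Σ_t Σ_{s∈B_t} p_t p_s, b_2 = Σ_t Σ_{s∈B_t\{t}} p_{st}, b_3 = Σ_t E| E[X_t − p_t | X_s, s ∉ B_t] |. Then the total variation distance between the law of (X_t)_{t∈I} and the law of (X'_t)_{t∈I} is at most 8(b_1 + b_2 + b_3). -/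
noncomputable section

namespace PaperFormal

/-- A process together with its underlying probability space. -/
structure RVSetup (S : Type) where
  Ω : Type
  [m : MeasurableSpace Ω]
  P : MeasureTheory.Measure Ω
  X : ℕ → Ω → S

attribute [instance] RVSetup.m

/-- A field (process indexed by a set of vertices `V`) together with its
underlying probability space. -/
structure FieldSetup (S V : Type) where
  Ω : Type
  [m : MeasurableSpace Ω]
  P : MeasureTheory.Measure Ω
  F : V → Ω → S

attribute [instance] FieldSetup.m

/-- A family of walks (one starting measure for each point of `S`) on a common
path space. -/
structure FamilySetup (S : Type) where
  Ω : Type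
  [m : MeasurableSpace Ω]
  P : S → MeasureTheory.Measure Ω
  X : ℕ → Ω → S

attribute [instance] FamilySetup.m

open MeasureTheory ProbabilityTheory Filter Set
open scoped ENNReal NNReal Topology Classical


/-! ### Basic measurable-space conventions -/

instance setMS {β : Type*} : MeasurableSpace (Set β) := ⊤
instance zmodMS {n : ℕ} : MeasurableSpace (ZMod n) := ⊤

/-- Total variation distance between two measures. -/
def tvDist {A : Type*} [MeasurableSpace A] (μ ν : Measure A) : ℝ :=
  ⨆ E : {E : Set A // MeasurableSet E}, |(μ E).toReal - (ν E).toReal|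

/-- Coercion `ℕ∞ → ℝ≥0∞`. -/
def toE (k : ℕ∞) : ℝ≥0∞ := ENat.toENNReal k

/-! ### State spaces: the torus `ℤ_n^d` and the lattice `ℤ^d` -/

/-- The torus `ℤ_n^d`. -/
abbrev Torus (n d : ℕ) := Fin d → ZMod n

/-- The lattice `ℤ^d`. -/
abbrev Zd (d : ℕ) := Fin d → ℤ

/-- Nearest-neighbour relation on `R^d` for a ring `R` (used for `ZMod n` and `ℤ`). -/
def nbr {d : ℕ} {R : Type*} [Add R] [Sub R] [One R] (x y : Fin d → R) : Prop :=
  ∃ i : Fin d, (y i = x i + 1 ∨ y i = x i - 1) ∧ ∀ j, j ≠ i → y j = x j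

/-- One-step transition probability of the simple random walk in dimension `d`. -/
def stepProb {d : ℕ} {R : Type*} [Add R] [Sub R] [One R] (x y : Fin d → R) : ℝ≥0∞ :=
  if nbr x y then (2 * (d : ℝ≥0∞))⁻¹ else 0

/-- The Markov property with simple-random-walk one-step transition probabilities. -/
def IsMarkovSRW {Ω : Type} [MeasurableSpace Ω] {d : ℕ} {R : Type} [Add R] [Sub R] [One R]
    (P : Measure Ω) (X : ℕ → Ω → (Fin d → R)) : Prop :=
  ∀ (t : ℕ) (w : ℕ → (Fin d → R)) (y : Fin d → R),
    P ({ω | ∀ i ≤ t, X i ω = w i} ∩ {ω | X (t + 1) ω = y})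
      = P {ω | ∀ i ≤ t, X i ω = w i} * stepProb (w t) y

/-- `W` is a simple random walk on `ℤ_n^d` started from its stationary (uniform) distribution. -/
def RVSetup.IsStationarySRW {n d : ℕ} (W : RVSetup (Torus n d)) : Prop :=
  IsProbabilityMeasure W.P ∧ (∀ t, Measurable (W.X t)) ∧
    (∀ x : Torus n d, W.P {ω | W.X 0 ω = x} = ((n : ℝ≥0∞) ^ d)⁻¹) ∧
    IsMarkovSRW W.P W.X

/-- `W` is a simple random walk on `ℤ^d` started from `x0`. -/
def RVSetup.IsSRWFrom {d : ℕ} (W : RVSetup (Zd d)) (x0 : Zd d) : Prop :=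
  IsProbabilityMeasure W.P ∧ (∀ t, Measurable (W.X t)) ∧
    W.P {ω | W.X 0 ω = x0} = 1 ∧ IsMarkovSRW W.P W.X

/-! ### Hitting times, uncovered set, cover time -/

/-- First time `≥ s` at which the process is in `A` (`⊤` if never). -/
def hitFrom {Ω S : Type*} (X : ℕ → Ω → S) (A : Set S) (s : ℕ∞) (ω : Ω) : ℕ∞ :=
  sInf {t : ℕ∞ | ∃ k : ℕ, t = (k : ℕ∞) ∧ s ≤ (k : ℕ∞) ∧ X k ω ∈ A}

/-- Hitting time `τ_x` of the point `x`. -/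
def hitTime {Ω S : Type*} (X : ℕ → Ω → S) (x : S) : Ω → ℕ∞ :=
  hitFrom X {x} 0

/-- The uncovered set `𝒰(t) = {x : τ_x > t}`. -/
def uncovered {Ω : Type} {n d : ℕ} (X : ℕ → Ω → Torus n d) (t : ℝ) (ω : Ω) :
    Set (Torus n d) :=
  {x | ENNReal.ofReal t < toE (hitTime X x ω)}

/-- The law of the walk conditioned to start at `x` (i.e. the walk started at `x`). -/
def RVSetup.from' {n d : ℕ} (W : RVSetup (Torus n d)) (x : Torus n d) : Measure W.Ω :=
  ProbabilityTheory.cond W.P {ω | W.X 0 ω = x}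

/-- `max_y τ_y`. -/
def maxHit {Ω : Type} {n d : ℕ} (X : ℕ → Ω → Torus n d) (ω : Ω) : ℝ≥0∞ :=
  ⨆ y : Torus n d, toE (hitTime X y ω)

/-- The expected cover time `t_cov = max_x E_x[max_y τ_y]`. -/
def covTime {n d : ℕ} (W : RVSetup (Torus n d)) : ℝ :=
  ⨆ x : Torus n d, (∫⁻ ω, maxHit W.X ω ∂(W.from' x)).toReal

/-- The law `ν_{α,n}` of `{x : Z_x = 1}` for i.i.d. Bernoulli(`p`) variables `(Z_x)`. -/
def nuLaw (n d : ℕ) (p : ℝ) : Measure (Set (Torus n d)) :=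
  Measure.sum fun U : Finset (Torus n d) =>
    ((ENNReal.ofReal p) ^ U.card * (ENNReal.ofReal (1 - p)) ^ (n ^ d - U.card)) •
      Measure.dirac (↑U : Set (Torus n d))

/-! ### Geometry on the torus -/

/-- `|a - b| ∧ (n - |a - b|)` for `a b : ZMod n`. -/
def cdist {n : ℕ} (a b : ZMod n) : ℕ := min (a - b).val (b - a).val

/-- Closed Euclidean ball in the torus. -/
def ballT {n d : ℕ} (x : Torus n d) (r : ℝ) : Set (Torus n d) :=
  {y | (∑ i, ((cdist (y i) (x i) : ℝ)) ^ 2) ≤ r ^ 2}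

/-- Euclidean distance on the torus. -/
def tdist {n d : ℕ} (x y : Torus n d) : ℝ :=
  Real.sqrt (∑ i, ((cdist (x i) (y i) : ℝ)) ^ 2)

/-- Outer boundary of a set. -/
def obdry {d : ℕ} {R : Type} [Add R] [Sub R] [One R] (A : Set (Fin d → R)) :
    Set (Fin d → R) :=
  {y | y ∉ A ∧ ∃ x ∈ A, nbr x y}

/-! ### Excursions -/

/-- The pair `(ρ_k, ρ̃_k)` of excursion stopping times across `B(x,R) \ B(x,r)`. -/
def excTimes {Ω : Type} {n d : ℕ} (X : ℕ → Ω → Torus n d) (x : Torus n d) (r R : ℝ) :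
    ℕ → (Ω → ℕ∞) × (Ω → ℕ∞)
  | 0 =>
      let ρ : Ω → ℕ∞ := fun ω => hitFrom X (obdry (ballT x r)) 0 ω
      (ρ, fun ω => hitFrom X (ballT x R)ᶜ (ρ ω) ω)
  | k + 1 =>
      let prev := excTimes X x r R k
      let ρ : Ω → ℕ∞ := fun ω => hitFrom X (obdry (ballT x r)) (prev.2 ω) ω
      (ρ, fun ω => hitFrom X (ballT x R)ᶜ (ρ ω) ω)

/-- `ρ̃_k^x`. -/
def rhot {Ω : Type} {n d : ℕ} (X : ℕ → Ω → Torus n d) (x : Torus n d) (r R : ℝ) (k : ℕ) :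
    Ω → ℕ∞ :=
  (excTimes X x r R k).2

/-- `N_x(r,R,t)`: number of excursions across `B(x,R)\B(x,r)` completed before time `t`
(after the walk first exits `B(x,R)`). -/
def Nexc {Ω : Type} {n d : ℕ} (X : ℕ → Ω → Torus n d) (x : Torus n d) (r R t : ℝ) (ω : Ω) :
    ℕ :=
  sInf {k : ℕ |
    ENNReal.ofReal t ≤ ∑ i ∈ Finset.Icc 1 k, (toE (rhot X x r R i ω) - toE (rhot X x r R (i - 1) ω))}

/-- `Y_j`: exit point of the `j`-th excursion across `B(0,R)\B(0,r)`. -/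
def Yexit {Ω : Type} {n d : ℕ} (X : ℕ → Ω → Torus n d) (r R : ℝ) (j : ℕ) (ω : Ω) :
    Torus n d :=
  X ((rhot X (0 : Torus n d) r R j ω).toNat) ω

/-- `(K, π)` is the transition matrix and stationary distribution of the exit-point chain
`(Y_j)` of the excursions across `B(0,R)\B(0,r)`. -/
def IsExitChain {n d : ℕ} (W : RVSetup (Torus n d)) (r R : ℝ)
    (K : Torus n d → Torus n d → ℝ≥0∞) (π : Torus n d → ℝ≥0∞) : Prop :=
  (∀ (j : ℕ) (w : ℕ → Torus n d) (y : Torus n d),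
      W.P ({ω | ∀ i ≤ j, Yexit W.X r R i ω = w i} ∩ {ω | Yexit W.X r R (j + 1) ω = y})
        = W.P {ω | ∀ i ≤ j, Yexit W.X r R i ω = w i} * K (w j) y)
    ∧ (∀ x, (∑' y, K x y) = 1)
    ∧ (∑' x, π x) = 1
    ∧ (∀ y, (∑' x, π x * K x y) = π y)
    ∧ (∀ x, x ∉ obdry (ballT (0 : Torus n d) R) → π x = 0)

/-- Powers of a transition kernel. -/
def kpow {S : Type} (K : S → S → ℝ≥0∞) : ℕ → S → S → ℝ≥0∞
  | 0 => fun x y => if x = y then 1 else 0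
  | j + 1 => fun x y => ∑' z, kpow K j x z * K z y

/-- Total variation distance between two (sub)probability mass functions. -/
def massTV {S : Type} (μ ν : S → ℝ≥0∞) : ℝ :=
  ⨆ A : Set S, |(∑' a : A, μ a).toReal - (∑' a : A, ν a).toReal|

/-- Mixing time of a chain with kernel `K` and stationary distribution `π`,
with the chain started from points of `supp`. -/
def mixTime {S : Type} (K : S → S → ℝ≥0∞) (π : S → ℝ≥0∞) (supp : Set S) : ℕ :=
  sInf {j : ℕ | ∀ x ∈ supp, massTV (kpow K j x) π ≤ 1 / 4}

/-- `T_{r,R} = E_{π̃}[ρ̃_1 - ρ̃_0]`, the expected excursion length started from `π̃`. -/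
def Texc {n d : ℕ} (W : RVSetup (Torus n d)) (r R : ℝ) (π : Torus n d → ℝ≥0∞) : ℝ≥0∞ :=
  ∑' y : Torus n d, π y *
    ((∫⁻ ω in {ω | Yexit W.X r R 0 ω = y},
        (toE (rhot W.X 0 r R 1 ω) - toE (rhot W.X 0 r R 0 ω)) ∂W.P)
      / W.P {ω | Yexit W.X r R 0 ω = y})

/-- `f(a,b) = P_a(τ_0 > ρ̃_0 | X(ρ̃_0) = b)`. -/
def fExc {n d : ℕ} (W : RVSetup (Torus n d)) (r R : ℝ) (a b : Torus n d) : ℝ :=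
  ((W.from' a) ({ω | rhot W.X 0 r R 0 ω < hitTime W.X (0 : Torus n d) ω}
        ∩ {ω | Yexit W.X r R 0 ω = b})
    / (W.from' a) {ω | Yexit W.X r R 0 ω = b}).toReal

/-- `m = -E_ν[log f(Y_0, Y_1)]` where `ν(a,b) = π̃(a) K(a,b)`. -/
def mExc {n d : ℕ} (W : RVSetup (Torus n d)) (r R : ℝ)
    (K : Torus n d → Torus n d → ℝ≥0∞) (π : Torus n d → ℝ≥0∞) : ℝ :=
  -∑' a : Torus n d, ∑' b : Torus n d, (π a * K a b).toReal * Real.log (fExc W r R a b)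

/-- `t_* = (1/m) log(n^d) T_{r,R}`. -/
def tStar {n d : ℕ} (W : RVSetup (Torus n d)) (r R : ℝ)
    (K : Torus n d → Torus n d → ℝ≥0∞) (π : Torus n d → ℝ≥0∞) : ℝ :=
  (mExc W r R K π)⁻¹ * Real.log ((n : ℝ) ^ d) * (Texc W r R π).toReal

/-- `A = α t_* / ((1+δ) T_{r,R})`. -/
def Aexc {n d : ℕ} (α δ : ℝ) (W : RVSetup (Torus n d)) (r R : ℝ)
    (K : Torus n d → Torus n d → ℝ≥0∞) (π : Torus n d → ℝ≥0∞) : ℝ :=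
  α * tStar W r R K π / ((1 + δ) * (Texc W r R π).toReal)

/-- `σ_x`: first (real) time by which `A` excursions across `B(x,R)\B(x,r)` are completed. -/
def sigmaExc {Ω : Type} {n d : ℕ} (X : ℕ → Ω → Torus n d) (x : Torus n d) (r R A : ℝ)
    (ω : Ω) : ℝ :=
  sInf {t : ℝ | 0 ≤ t ∧ A ≤ (Nexc X x r R t ω : ℝ)}

/-- `τ̃_x`: first visit to `x` after first hitting `∂B(x,R)`. -/
def tauTilde {Ω : Type} {n d : ℕ} (X : ℕ → Ω → Torus n d) (x : Torus n d) (R : ℝ)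
    (ω : Ω) : ℕ∞ :=
  hitFrom X {x} (hitFrom X (obdry (ballT x R)) 0 ω) ω

/-- `Q_x = 1(τ̃_x > σ_x)`. -/
def Qx {Ω : Type} {n d : ℕ} (X : ℕ → Ω → Torus n d) (r R A : ℝ) (x : Torus n d)
    (ω : Ω) : ℝ :=
  if ENNReal.ofReal (sigmaExc X x r R A ω) < toE (tauTilde X x R ω) then 1 else 0

/-- `Ū = {x : Q_x = 1}`. -/
def Uset {Ω : Type} {n d : ℕ} (X : ℕ → Ω → Torus n d) (r R A : ℝ) (ω : Ω) :
    Set (Torus n d) :=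
  {x | Qx X r R A x ω = 1}

/-! ### The lattice `ℤ^d`: Green's function and return probability -/

/-- Green's function `G(0, x) = E[∑_t 1(X_t = x)]` for a walk `W`. -/
def greenZ {d : ℕ} (W : RVSetup (Zd d)) (x : Zd d) : ℝ :=
  (∫⁻ ω, (∑' t : ℕ, if W.X t ω = x then (1 : ℝ≥0∞) else 0) ∂W.P).toReal

/-- Return probability `p_d` of a walk `W` (started at 0). -/
def returnProb {d : ℕ} (W : RVSetup (Zd d)) : ℝ :=
  (W.P {ω | ∃ t : ℕ, 1 ≤ t ∧ W.X t ω = 0}).toReal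

/-- Euclidean norm on `ℤ^d`. -/
def znorm {d : ℕ} (x : Zd d) : ℝ := Real.sqrt (∑ i, ((x i : ℝ)) ^ 2)

/-- `c` is the constant in the asymptotic `G(0,x) ~ c ‖x‖^{2-d}`. -/
def IsGreenConst {d : ℕ} (W : RVSetup (Zd d)) (c : ℝ) : Prop :=
  ∀ z : ℕ → Zd d, Tendsto (fun k => znorm (z k)) atTop atTop →
    Tendsto (fun k => greenZ W (z k) * znorm (z k) ^ ((d : ℝ) - 2)) atTop (𝓝 c)

/-! ### The Gaussian free field on a box -/

/-- `W` is a family of simple random walks on `ℤ^d`, `W.P x` being the law of the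
walk started at `x`. -/
def FamilySetup.IsSRWFamily {d : ℕ} (W : FamilySetup (Zd d)) : Prop :=
  ∀ x : Zd d, IsProbabilityMeasure (W.P x) ∧ (∀ t, Measurable (W.X t)) ∧
    (W.P x) {ω | W.X 0 ω = x} = 1 ∧ IsMarkovSRW (W.P x) W.X

/-- The vertex set `[0,n]^d ∩ ℤ^d`. -/
def boxV (n d : ℕ) : Set (Zd d) := {x | ∀ i, 0 ≤ x i ∧ x i ≤ (n : ℤ)}

/-- The boundary `∂[0,n]^d ∩ ℤ^d`. -/
def boxBdry (n d : ℕ) : Set (Zd d) := {x | x ∈ boxV n d ∧ ∃ i, x i = 0 ∨ x i = (n : ℤ)}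

/-- The bulk `[δn, (1-δ)n]^d ∩ ℤ^d`. -/
def bulk (n d : ℕ) (δ : ℝ) : Set (Zd d) :=
  {x | ∀ i, δ * n ≤ (x i : ℝ) ∧ (x i : ℝ) ≤ (1 - δ) * n}

/-- `E_x[∑_{i=0}^{τ} 1(X_i = y)]`, where `τ` is the hitting time of
`∂[0,n]^d ∩ ℤ^d`: the covariance of the GFF on the box with zero boundary
conditions. -/
def boxGreen {d : ℕ} (W : FamilySetup (Zd d)) (n : ℕ) (x y : Zd d) : ℝ :=
  (∫⁻ ω, (∑' i : ℕ,
      if (i : ℕ∞) ≤ hitFrom W.X (boxBdry n d) 0 ω ∧ W.X i ω = y then (1 : ℝ≥0∞) else 0)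
    ∂(W.P x)).toReal

/-- Green's function of the whole-lattice walk family: `G(x,y) = E_x[∑_t 1(X_t = y)]`. -/
def latGreen {d : ℕ} (W : FamilySetup (Zd d)) (x y : Zd d) : ℝ :=
  (∫⁻ ω, (∑' t : ℕ, if W.X t ω = y then (1 : ℝ≥0∞) else 0) ∂(W.P x)).toReal

/-- Return probability `p_d` for the family `W`. -/
def famReturnProb {d : ℕ} (W : FamilySetup (Zd d)) : ℝ :=
  ((W.P 0) {ω | ∃ t : ℕ, 1 ≤ t ∧ W.X t ω = 0}).toReal

/-- `φ = G.F` is a centered Gaussian field with covariance `cov` on the vertex set `V`: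
every finite linear combination of the `φ_x`, `x ∈ V`, is a centered Gaussian
variable with the variance prescribed by `cov`. -/
def FieldSetup.IsGaussianField {I : Type} (G : FieldSetup ℝ I) (V : Set I)
    (cov : I → I → ℝ) : Prop :=
  IsProbabilityMeasure G.P ∧ (∀ x, Measurable (G.F x)) ∧
    ∀ s : Finset I, ↑s ⊆ V → ∀ c : I → ℝ,
      MeasureTheory.Measure.map (fun ω => ∑ x ∈ s, c x * G.F x ω) G.P
        = gaussianReal 0 (Real.toNNReal (∑ x ∈ s, ∑ y ∈ s, c x * c y * cov x y))

/-- The threshold `√(2 α d G(0) log n)` for `α`-high points. -/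
def highThr (d : ℕ) (α G0 : ℝ) (n : ℕ) : ℝ :=
  Real.sqrt (2 * α * d * G0 * Real.log n)

/-- The set `ℋ_α` of `α`-high points of the field `φ`. -/
def highPts {d : ℕ} (G : FieldSetup ℝ (Zd d)) (n : ℕ) (δ thr : ℝ) (ω : G.Ω) :
    Set (Zd d) :=
  {x | x ∈ bulk n d δ ∧ thr ≤ G.F x ω}

/-- `Z = B.F` is an independent field of Bernoulli random variables with
success probabilities `p`. -/
def FieldSetup.IsBernoulliField {I : Type} (B : FieldSetup Bool I) (p : I → ℝ≥0∞) :
    Prop :=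
  IsProbabilityMeasure B.P ∧ (∀ x, Measurable (B.F x)) ∧
    iIndepFun B.F B.P ∧
    ∀ x, B.P {ω | B.F x ω = true} = p x

/-- The random subset `{x ∈ bulk : Z_x = 1}` of the bulk attached to a Bernoulli field. -/
def bernSet {d : ℕ} (B : FieldSetup Bool (Zd d)) (n : ℕ) (δ : ℝ) (ω : B.Ω) :
    Set (Zd d) :=
  {x | x ∈ bulk n d δ ∧ B.F x ω = true}


/-! ### Further helpers -/

/-- Conditional probability `μ(A | B)`. -/
def condProb {Ωs : Type} [MeasurableSpace Ωs] (μ : MeasureTheory.Measure Ωs)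
    (A B : Set Ωs) : ℝ :=
  (μ (A ∩ B) / μ B).toReal

/-- Exit point `X(τ_R)` of the ball `B(0,R)`. -/
def exitPt {Ω : Type} {n d : ℕ} (X : ℕ → Ω → Torus n d) (R : ℝ) (ω : Ω) : Torus n d :=
  X ((hitFrom X (obdry (ballT (0 : Torus n d) R)) 0 ω).toNat) ω

/-- The inner radius `r = n^{γ(1-ε)}`. -/
def rad (n : ℕ) (γ ε : ℝ) : ℝ := (n : ℝ) ^ (γ * (1 - ε))

/-- The outer radius `R = n^γ`. -/
def Rad (n : ℕ) (γ : ℝ) : ℝ := (n : ℝ) ^ γ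

/-- The parameter `δ = r^{(2-d)/2} n^ψ`. -/
def deltaPar (n d : ℕ) (γ ε ψ : ℝ) : ℝ :=
  (rad n γ ε) ^ (((2 : ℝ) - d) / 2) * (n : ℝ) ^ ψ

/-- The transition kernel of the pair chain `(Y_{i-1}, Y_i)`. -/
def pairKernel {S : Type} (K : S → S → ℝ≥0∞) : S × S → S × S → ℝ≥0∞ :=
  fun p q => if q.1 = p.2 then K q.1 q.2 else 0

/-- Total variation distance between two real-valued mass functions on a finite set. -/
def finTV {S : Type} (μ ν : S → ℝ) : ℝ :=
  ⨆ A : Finset S, |∑ a ∈ A, (μ a - ν a)|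

/-- The σ-algebra `σ(Y_i : i ≥ 1)` generated by the exit points of the excursions. -/
def excSigma {n d : ℕ} (W : RVSetup (Torus n d)) (r R : ℝ) : MeasurableSpace W.Ω :=
  ⨆ i : ℕ, ⨆ _ : 1 ≤ i, MeasurableSpace.comap (Yexit W.X r R i) inferInstance


/-! Write `A t = {X t = 1}` and `p t = P(A t)`. Both laws live on the `2^|I|` atoms
`pattern A univ T`, and independence gives the atom `T` the product mass `∏ (p s or 1 - p s)`.
Adding the coordinates one at a time, the total error on the atoms grows at each step by at most
twice the `dependence` of the new event `A u` on the atoms of the earlier ones, i.e. the sum of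
`|Cov(1_{A u}, 1_P)|` over these atoms `P`; refining the partition only increases this sum, so we
may use the atoms of all other coordinates instead. Each neighbour `v ∈ B u \ {u}` adds at most
`2 (p_{uv} + p_u p_v)` to it, and the atoms of the coordinates outside `B u` contribute at most
`E|E[X_u - p_u | X_s, s ∉ B u]|`, since the covariance with such an atom is the integral of that
conditional expectation over it. -/

section Pattern

variable {Ω I : Type*}

def pattern (A : I → Set Ω) (J T : Finset I) : Set Ω :=
  ⋂ s ∈ J, if s ∈ T then A s else (A s)ᶜ

variable {A : I → Set Ω} {J T : Finset I} {u : I}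

@[simp]
lemma pattern_empty (A : I → Set Ω) (T : Finset I) : pattern A ∅ T = univ := by
  simp [pattern]

lemma pattern_insert_insert (hu : u ∉ J) :
    pattern A (insert u J) (insert u T) = pattern A J T ∩ A u := by
  rw [pattern, Finset.set_biInter_insert, if_pos (Finset.mem_insert_self u T), inter_comm]
  congr 1
  refine iInter₂_congr fun s hs => ?_
  simp only [Finset.mem_insert, ne_of_mem_of_not_mem hs hu, false_or]

lemma pattern_insert (hu : u ∉ T) : pattern A (insert u J) T = pattern A J T \ A u := by
  rw [pattern, Finset.set_biInter_insert, if_neg hu, sdiff_eq, inter_comm]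
  rfl

lemma pairwiseDisjoint_pattern : (J.powerset : Set (Finset I)).PairwiseDisjoint (pattern A J) := by
  intro T hT T' hT' hne
  obtain ⟨s, hsJ, hs⟩ : ∃ s ∈ J, ¬(s ∈ T ↔ s ∈ T') := by
    by_contra! h
    exact hne (Finset.ext fun s => by
      by_cases hs : s ∈ J
      · exact h s hs
      · exact iff_of_false (fun h' => hs (Finset.mem_powerset.mp hT h'))
          (fun h' => hs (Finset.mem_powerset.mp hT' h')))
  refine Set.disjoint_left.mpr fun ω hω hω' => ?_
  have h := mem_iInter₂.mp hω s hsJ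
  have h' := mem_iInter₂.mp hω' s hsJ
  by_cases hsT : s ∈ T <;> by_cases hsT' : s ∈ T' <;> simp_all

lemma measurableSet_pattern {m : MeasurableSpace Ω} (hA : ∀ s ∈ J, MeasurableSet[m] (A s)) :
    MeasurableSet[m] (pattern A J T) :=
  .biInter J.countable_toSet fun s hs => by
    split_ifs
    exacts [hA s hs, (hA s hs).compl]

variable [MeasurableSpace Ω]

lemma sum_measureReal_inter_pattern {μ : Measure Ω} [IsFiniteMeasure μ]
    (hA : ∀ s, MeasurableSet (A s)) (S : Set Ω) (J : Finset I) :
    ∑ T ∈ J.powerset, μ.real (S ∩ pattern A J T) = μ.real S := by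
  induction J using Finset.induction_on with
  | empty => simp
  | insert u J hu ih =>
    rw [Finset.sum_powerset_insert hu, ← ih, add_comm, ← Finset.sum_add_distrib]
    refine Finset.sum_congr rfl fun T hT => ?_
    have huT : u ∉ T := fun h => hu (Finset.mem_powerset.mp hT h)
    rw [pattern_insert_insert hu, pattern_insert huT, ← inter_assoc, ← inter_sdiff_assoc,
      measureReal_inter_add_sdiff (hA u)]

end Pattern

section Dependence

variable {Ω I : Type*} [MeasurableSpace Ω] (μ : Measure Ω)

def setCov (B C : Set Ω) : ℝ := μ.real (B ∩ C) - μ.real B * μ.real C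

def dependence (A : I → Set Ω) (u : I) (J : Finset I) : ℝ :=
  ∑ T ∈ J.powerset, |setCov μ (A u) (pattern A J T)|

variable {μ}

lemma abs_setCov_le (B C : Set Ω) :
    |setCov μ B C| ≤ μ.real (B ∩ C) + μ.real B * μ.real C := by
  refine (abs_sub _ _).trans_eq ?_
  rw [abs_of_nonneg measureReal_nonneg, abs_of_nonneg (by positivity)]

variable [IsFiniteMeasure μ]

lemma setCov_inter_add_sdiff (B C : Set Ω) {D : Set Ω} (hD : MeasurableSet D) :
    setCov μ B (C ∩ D) + setCov μ B (C \ D) = setCov μ B C := by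
  have hC := measureReal_inter_add_sdiff (μ := μ) (s := C) hD
  have hBC := measureReal_inter_add_sdiff (μ := μ) (s := B ∩ C) hD
  rw [inter_assoc, inter_sdiff_assoc] at hBC
  simp only [setCov]
  rw [← hC, ← hBC]
  ring

lemma setCov_eq_setIntegral {B C : Set Ω} (hB : MeasurableSet B) :
    setCov μ B C = ∫ x in C, (B.indicator 1 x - μ.real B) ∂μ := by
  have h1 : Integrable (B.indicator (1 : Ω → ℝ)) μ := (integrable_const 1).indicator hB
  rw [integral_sub h1.restrict (integrable_const _),
    integral_indicator_one hB, measureReal_restrict_apply hB, setIntegral_const, smul_eq_mul,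
    setCov, mul_comm]

variable {A : I → Set Ω} {J : Finset I} {u v : I}

lemma dependence_le_insert (hA : ∀ s, MeasurableSet (A s)) (hv : v ∉ J) :
    dependence μ A u J ≤ dependence μ A u (insert v J) := by
  rw [dependence, dependence, Finset.sum_powerset_insert hv, ← Finset.sum_add_distrib]
  refine Finset.sum_le_sum fun T hT => ?_
  have hvT : v ∉ T := fun h => hv (Finset.mem_powerset.mp hT h)
  rw [pattern_insert_insert hv, pattern_insert hvT, ← setCov_inter_add_sdiff (A u) _ (hA v),
    add_comm]
  exact abs_add_le _ _

lemma dependence_mono (hA : ∀ s, MeasurableSet (A s)) : Monotone (dependence μ A u) :=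
  Finset.monotone_iff_forall_le_insert.mpr fun _ _ hv => dependence_le_insert hA hv

lemma dependence_insert_le (hA : ∀ s, MeasurableSet (A s)) (hv : v ∉ J) :
    dependence μ A u (insert v J)
      ≤ dependence μ A u J + 2 * (μ.real (A v ∩ A u) + μ.real (A u) * μ.real (A v)) := by
  have hterm : ∀ T ∈ J.powerset,
      |setCov μ (A u) (pattern A J T \ A v)| + |setCov μ (A u) (pattern A J T ∩ A v)|
        ≤ |setCov μ (A u) (pattern A J T)| + 2 * (μ.real ((A v ∩ A u) ∩ pattern A J T)
          + μ.real (A u) * μ.real (A v ∩ pattern A J T)) := by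
    intro T _
    have hsplit := setCov_inter_add_sdiff (μ := μ) (A u) (pattern A J T) (hA v)
    have hbound := (abs_setCov_le (μ := μ) (A u) (pattern A J T ∩ A v)).trans_eq
      (by rw [inter_comm (pattern A J T) (A v), ← inter_assoc, inter_comm (A u) (A v)])
    rw [eq_sub_of_add_eq' hsplit]
    linarith [abs_sub (setCov μ (A u) (pattern A J T)) (setCov μ (A u) (pattern A J T ∩ A v))]
  calc dependence μ A u (insert v J)
      = ∑ T ∈ J.powerset, (|setCov μ (A u) (pattern A J T \ A v)|
          + |setCov μ (A u) (pattern A J T ∩ A v)|) := by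
        rw [dependence, Finset.sum_powerset_insert hv, ← Finset.sum_add_distrib]
        refine Finset.sum_congr rfl fun T hT => ?_
        have hvT : v ∉ T := fun h => hv (Finset.mem_powerset.mp hT h)
        rw [pattern_insert_insert hv, pattern_insert hvT]
    _ ≤ ∑ T ∈ J.powerset, (|setCov μ (A u) (pattern A J T)|
          + 2 * (μ.real ((A v ∩ A u) ∩ pattern A J T)
            + μ.real (A u) * μ.real (A v ∩ pattern A J T))) := Finset.sum_le_sum hterm
    _ = _ := by
        rw [Finset.sum_add_distrib, ← Finset.mul_sum, Finset.sum_add_distrib, ← Finset.mul_sum,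
          sum_measureReal_inter_pattern hA, sum_measureReal_inter_pattern hA, dependence]

lemma dependence_union_le (hA : ∀ s, MeasurableSet (A s)) {N : Finset I} (hJN : Disjoint J N) :
    dependence μ A u (J ∪ N) ≤ dependence μ A u J
      + 2 * ∑ v ∈ N, (μ.real (A v ∩ A u) + μ.real (A u) * μ.real (A v)) := by
  induction N using Finset.induction_on with
  | empty => simp
  | insert v N hvN ih =>
    rw [Finset.disjoint_insert_right] at hJN
    have hv : v ∉ J ∪ N := by simp [hJN.1, hvN]
    rw [Finset.union_insert, Finset.sum_insert hvN, mul_add]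
    linarith [dependence_insert_le (μ := μ) (u := u) hA hv, ih hJN.2]

end Dependence

section CondExp

variable {Ω I : Type*} {m m₀ : MeasurableSpace Ω} {μ : Measure[m₀] Ω}

lemma sum_abs_setIntegral_le_integral_abs_condExp
    (hm : m ≤ m₀) [SigmaFinite (μ.trim hm)] {f : Ω → ℝ} (hf : Integrable f μ)
    {ι : Type*} (s : Finset ι) {P : ι → Set Ω} (hP : ∀ i ∈ s, MeasurableSet[m] (P i))
    (hdisj : (s : Set ι).PairwiseDisjoint P) :
    ∑ i ∈ s, |∫ x in P i, f x ∂μ| ≤ ∫ x, |μ[f|m] x| ∂μ :=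
  calc ∑ i ∈ s, |∫ x in P i, f x ∂μ| = ∑ i ∈ s, |∫ x in P i, μ[f|m] x ∂μ| :=
        Finset.sum_congr rfl fun i hi => by rw [setIntegral_condExp hm hf (hP i hi)]
    _ ≤ ∑ i ∈ s, ∫ x in P i, |μ[f|m] x| ∂μ :=
        Finset.sum_le_sum fun i _ => abs_integral_le_integral_abs
    _ = ∫ x in ⋃ i ∈ s, P i, |μ[f|m] x| ∂μ :=
        (integral_biUnion_finset s (fun i hi => hm _ (hP i hi)) hdisj
          fun _ _ => integrable_condExp.abs.integrableOn).symm
    _ ≤ ∫ x, |μ[f|m] x| ∂μ :=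
        setIntegral_le_integral integrable_condExp.abs (ae_of_all _ fun _ => abs_nonneg _)

lemma dependence_le_integral_abs_condExp [IsFiniteMeasure μ] (hm : m ≤ m₀) {A : I → Set Ω}
    {J : Finset I} (hA : ∀ s, MeasurableSet[m₀] (A s))
    (hAm : ∀ s ∈ J, MeasurableSet[m] (A s)) (u : I) :
    dependence μ A u J
      ≤ ∫ x, |μ[fun y => (A u).indicator 1 y - μ.real (A u) | m] x| ∂μ := by
  have hf : Integrable (fun y => (A u).indicator 1 y - μ.real (A u)) μ :=
    ((integrable_const (1 : ℝ)).indicator (hA u)).sub (integrable_const _)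
  calc dependence μ A u J
      = ∑ T ∈ J.powerset, |∫ x in pattern A J T, (A u).indicator 1 x - μ.real (A u) ∂μ| :=
        Finset.sum_congr rfl fun T _ => by rw [setCov_eq_setIntegral (hA u)]
    _ ≤ _ := sum_abs_setIntegral_le_integral_abs_condExp hm hf _
        (fun _ _ => measurableSet_pattern hAm) pairwiseDisjoint_pattern

lemma dependence_erase_le [IsFiniteMeasure μ] [Fintype I] (hm : m ≤ m₀) {A : I → Set Ω}
    (hA : ∀ s, MeasurableSet[m₀] (A s)) {B : Finset I}
    (hAm : ∀ s ∈ Finset.univ \ B, MeasurableSet[m] (A s)) {u : I} (hu : u ∈ B) :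
    dependence μ A u (Finset.univ.erase u)
      ≤ ∫ x, |μ[fun y => (A u).indicator 1 y - μ.real (A u) | m] x| ∂μ
        + 2 * ∑ v ∈ B.erase u, (μ.real (A v ∩ A u) + μ.real (A u) * μ.real (A v)) := by
  have hsplit : Finset.univ.erase u = (Finset.univ \ B) ∪ B.erase u := by
    ext s
    by_cases hs : s ∈ B <;> by_cases hsu : s = u <;> simp_all
  rw [hsplit]
  refine (dependence_union_le hA (Finset.disjoint_of_subset_right (Finset.erase_subset u B)
    Finset.sdiff_disjoint)).trans ?_
  gcongr
  exact dependence_le_integral_abs_condExp hm hA hAm u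

end CondExp

section Independence

variable {Ω I : Type*} [MeasurableSpace Ω] {μ : Measure Ω}

def bernoulliMass (p : I → ℝ) (J T : Finset I) : ℝ :=
  ∏ s ∈ J, if s ∈ T then p s else 1 - p s

variable {p : I → ℝ} {J T : Finset I} {u : I}

omit [MeasurableSpace Ω] in
lemma bernoulliMass_insert_insert (hu : u ∉ J) :
    bernoulliMass p (insert u J) (insert u T) = p u * bernoulliMass p J T := by
  rw [bernoulliMass, Finset.prod_insert hu, if_pos (Finset.mem_insert_self u T)]
  congr 1
  refine Finset.prod_congr rfl fun s hs => ?_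
  simp only [Finset.mem_insert, ne_of_mem_of_not_mem hs hu, false_or]

omit [MeasurableSpace Ω] in
lemma bernoulliMass_insert (hu : u ∉ J) (huT : u ∉ T) :
    bernoulliMass p (insert u J) T = (1 - p u) * bernoulliMass p J T := by
  rw [bernoulliMass, Finset.prod_insert hu, if_neg huT]
  rfl

lemma iIndepSet_preimage_of_iIndepFun {β : I → Type*} [∀ i, MeasurableSpace (β i)]
    {f : ∀ i, Ω → β i} (hf : iIndepFun f μ) (hfm : ∀ i, Measurable (f i))
    {s : ∀ i, Set (β i)} (hs : ∀ i, MeasurableSet (s i)) :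
    iIndepSet (fun i => f i ⁻¹' s i) μ :=
  (iIndepSet_iff_meas_biInter fun i => hfm i (hs i)).2 fun J =>
    hf.measure_inter_preimage_eq_mul J fun i _ => hs i

lemma measureReal_pattern_of_iIndepSet {A : I → Set Ω} (hA : ∀ s, MeasurableSet (A s))
    (h : iIndepSet A μ) (J T : Finset I) :
    μ.real (pattern A J T) = bernoulliMass (fun s => μ.real (A s)) J T := by
  have := h.isProbabilityMeasure
  rw [measureReal_def, pattern, (iIndepSet_iff A μ).1 h J fun s _ => ?_, ENNReal.toReal_prod]
  · refine Finset.prod_congr rfl fun s _ => ?_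
    split_ifs
    · rfl
    · exact probReal_compl_eq_one_sub (hA s)
  · split_ifs
    exacts [MeasurableSpace.measurableSet_generateFrom rfl,
      (MeasurableSpace.measurableSet_generateFrom (mem_singleton (A s))).compl]

end Independence

section Telescoping

variable {Ω I : Type*} [MeasurableSpace Ω] {μ : Measure Ω} [IsProbabilityMeasure μ]
  {A : I → Set Ω}

/-- Compares the masses `(a - m, m)` of an atom split by a new event with the product masses
`((1 - p) q, p q)`. -/
lemma abs_sub_add_abs_sub_le {m a q p : ℝ} (hp0 : 0 ≤ p) (hp1 : p ≤ 1) :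
    |(a - m) - (1 - p) * q| + |m - p * q| ≤ 2 * |m - p * a| + |a - q| := by
  have h0 : |(a - m) - (1 - p) * q| ≤ (1 - p) * |a - q| + |m - p * a| :=
    calc |(a - m) - (1 - p) * q| = |(1 - p) * (a - q) - (m - p * a)| := by congr 1; ring
      _ ≤ |(1 - p) * (a - q)| + |m - p * a| := abs_sub _ _
      _ = (1 - p) * |a - q| + |m - p * a| := by rw [abs_mul, abs_of_nonneg (sub_nonneg.2 hp1)]
  have h1 : |m - p * q| ≤ |m - p * a| + p * |a - q| :=
    calc |m - p * q| = |(m - p * a) + p * (a - q)| := by congr 1; ring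
      _ ≤ |m - p * a| + |p * (a - q)| := abs_add_le _ _
      _ = |m - p * a| + p * |a - q| := by rw [abs_mul, abs_of_nonneg hp0]
  linarith

lemma sum_abs_measureReal_pattern_sub_bernoulliMass_le [Fintype I]
    (hA : ∀ s, MeasurableSet (A s)) (J : Finset I) :
    ∑ T ∈ J.powerset, |μ.real (pattern A J T) - bernoulliMass (fun s => μ.real (A s)) J T|
      ≤ 2 * ∑ u ∈ J, dependence μ A u (Finset.univ.erase u) := by
  induction J using Finset.induction_on with
  | empty => simp [bernoulliMass]
  | insert u J hu ih =>
    set q := bernoulliMass (fun s => μ.real (A s))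
    have hstep : ∀ T ∈ J.powerset,
        |μ.real (pattern A (insert u J) T) - q (insert u J) T|
          + |μ.real (pattern A (insert u J) (insert u T)) - q (insert u J) (insert u T)|
        ≤ 2 * |setCov μ (A u) (pattern A J T)| + |μ.real (pattern A J T) - q J T| := by
      intro T hT
      have huT : u ∉ T := fun h => hu (Finset.mem_powerset.mp hT h)
      have hsplit := measureReal_inter_add_sdiff (μ := μ) (s := pattern A J T) (hA u)
      have hq0 : q (insert u J) T = (1 - μ.real (A u)) * q J T := bernoulliMass_insert hu huT
      have hq1 : q (insert u J) (insert u T) = μ.real (A u) * q J T :=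
        bernoulliMass_insert_insert hu
      rw [pattern_insert huT, pattern_insert_insert hu, hq0, hq1, setCov, inter_comm (A u),
        eq_sub_of_add_eq' hsplit]
      exact abs_sub_add_abs_sub_le measureReal_nonneg measureReal_le_one
    have hmono : dependence μ A u J ≤ dependence μ A u (Finset.univ.erase u) :=
      dependence_mono hA fun s hs =>
        Finset.mem_erase.2 ⟨ne_of_mem_of_not_mem hs hu, Finset.mem_univ s⟩
    calc ∑ T ∈ (insert u J).powerset, |μ.real (pattern A (insert u J) T) - q (insert u J) T|
        = ∑ T ∈ J.powerset, (|μ.real (pattern A (insert u J) T) - q (insert u J) T|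
          + |μ.real (pattern A (insert u J) (insert u T)) - q (insert u J) (insert u T)|) := by
          rw [Finset.sum_powerset_insert hu, Finset.sum_add_distrib]
      _ ≤ ∑ T ∈ J.powerset,
          (2 * |setCov μ (A u) (pattern A J T)| + |μ.real (pattern A J T) - q J T|) :=
          Finset.sum_le_sum hstep
      _ = 2 * dependence μ A u J + ∑ T ∈ J.powerset, |μ.real (pattern A J T) - q J T| := by
          rw [Finset.sum_add_distrib, ← Finset.mul_sum, dependence]
      _ ≤ 2 * ∑ u ∈ insert u J, dependence μ A u (Finset.univ.erase u) := by
          rw [Finset.sum_insert hu]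
          linarith

end Telescoping

section ZeroOne

variable {Ω I : Type*} [MeasurableSpace Ω] {μ : Measure Ω}

def ones (Y : I → Ω → ℝ) (t : I) : Set Ω := {ω | Y t ω = 1}

lemma measurableSet_ones {Y : I → Ω → ℝ} (hY : ∀ t, Measurable (Y t)) (t : I) :
    MeasurableSet (ones Y t) :=
  hY t (measurableSet_singleton 1)

lemma tvDist_le_of_forall {β : Type*} [MeasurableSpace β] {ν ν' : Measure β} {c : ℝ}
    (h : ∀ E, MeasurableSet E → |ν.real E - ν'.real E| ≤ c) : tvDist ν ν' ≤ c := by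
  have : Nonempty {E : Set β // MeasurableSet E} := ⟨⟨∅, .empty⟩⟩
  exact ciSup_le fun E => h E.1 E.2

variable [IsFiniteMeasure μ] [Fintype I] {Y Y' : I → Ω → ℝ}

lemma measureReal_preimage_eq_sum_pattern (hY : ∀ t, Measurable (Y t))
    (h01 : ∀ t ω, Y t ω = 0 ∨ Y t ω = 1) (E : Set (I → ℝ)) :
    μ.real ((fun ω t => Y t ω) ⁻¹' E)
      = ∑ T ∈ Finset.univ.powerset, if (T : Set I).indicator 1 ∈ E
          then μ.real (pattern (ones Y) Finset.univ T) else 0 := by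
  rw [← sum_measureReal_inter_pattern (measurableSet_ones hY) _ Finset.univ]
  refine Finset.sum_congr rfl fun T _ => ?_
  have hval : ∀ ω ∈ pattern (ones Y) Finset.univ T,
      (fun t => Y t ω) = (T : Set I).indicator 1 := by
    intro ω hω
    funext t
    have ht := mem_iInter₂.mp hω t (Finset.mem_univ t)
    by_cases htT : t ∈ T
    · simp_all [ones]
    · simp only [htT, if_false, mem_compl_iff, ones, mem_ofPred_eq] at ht
      simp [htT, (h01 t ω).resolve_right ht]
  split_ifs with hE
  · rw [inter_eq_right.2 fun ω hω => by simp [mem_preimage, hval ω hω, hE]]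
  · rw [show (fun ω t => Y t ω) ⁻¹' E ∩ _ = ∅ from
      eq_empty_of_forall_notMem fun ω hω => hE (hval ω hω.2 ▸ hω.1), measureReal_empty]

lemma tvDist_map_le_sum_abs_pattern (hY : ∀ t, Measurable (Y t))
    (hY' : ∀ t, Measurable (Y' t)) (h01 : ∀ t ω, Y t ω = 0 ∨ Y t ω = 1)
    (h01' : ∀ t ω, Y' t ω = 0 ∨ Y' t ω = 1) :
    tvDist (μ.map fun ω t => Y t ω) (μ.map fun ω t => Y' t ω)
      ≤ ∑ T ∈ Finset.univ.powerset, |μ.real (pattern (ones Y) Finset.univ T)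
          - μ.real (pattern (ones Y') Finset.univ T)| := by
  refine tvDist_le_of_forall fun E hE => ?_
  rw [map_measureReal_apply (measurable_pi_lambda _ hY) hE,
    map_measureReal_apply (measurable_pi_lambda _ hY') hE,
    measureReal_preimage_eq_sum_pattern hY h01, measureReal_preimage_eq_sum_pattern hY' h01',
    ← Finset.sum_sub_distrib]
  refine (Finset.abs_sum_le_sum_abs _ _).trans (Finset.sum_le_sum fun T _ => ?_)
  split_ifs <;> simp

variable {X : I → Ω → ℝ}

lemma dependence_ones_le (hmX : ∀ t, Measurable (X t)) (h01 : ∀ t ω, X t ω = 0 ∨ X t ω = 1)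
    {B : Finset I} {t : I} (ht : t ∈ B) :
    dependence μ (ones X) t (Finset.univ.erase t)
      ≤ ∫ ω, |μ[fun ω' => X t ω' - μ.real (ones X t) |
            ⨆ s ∈ Finset.univ \ B, MeasurableSpace.comap (X s) inferInstance] ω| ∂μ
        + 2 * ∑ s ∈ B.erase t, μ.real (ones X s ∩ ones X t)
        + 2 * ∑ s ∈ B, μ.real (ones X t) * μ.real (ones X s) := by
  have hX : (fun ω => X t ω - μ.real (ones X t))
      = fun ω => (ones X t).indicator 1 ω - μ.real (ones X t) := by
    funext ω
    rcases h01 t ω with h | h <;> simp [ones, h]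
  have hm : (⨆ s ∈ Finset.univ \ B, MeasurableSpace.comap (X s) inferInstance)
      ≤ ‹MeasurableSpace Ω› := iSup₂_le fun s _ => (hmX s).comap_le
  have hAm : ∀ s ∈ Finset.univ \ B, MeasurableSet[⨆ s ∈ Finset.univ \ B,
      MeasurableSpace.comap (X s) inferInstance] (ones X s) := fun s hs =>
    le_iSup₂ (f := fun s (_ : s ∈ Finset.univ \ B) => MeasurableSpace.comap (X s) inferInstance)
      s hs _ ⟨{1}, measurableSet_singleton 1, rfl⟩
  have hprod := Finset.sum_le_sum_of_subset_of_nonneg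
    (f := fun s => μ.real (ones X t) * μ.real (ones X s))
    (Finset.erase_subset t B) fun _ _ _ => by positivity
  have h := dependence_erase_le (μ := μ) hm (measurableSet_ones hmX) hAm ht
  rw [← hX, Finset.sum_add_distrib] at h
  linarith

lemma two_mul_sum_dependence_ones_le (hmX : ∀ t, Measurable (X t))
    (h01 : ∀ t ω, X t ω = 0 ∨ X t ω = 1) (B : I → Finset I) (hB : ∀ t, t ∈ B t) :
    2 * ∑ t, dependence μ (ones X) t (Finset.univ.erase t)
      ≤ 8 * ((∑ t, ∑ s ∈ B t, μ.real (ones X t) * μ.real (ones X s))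
        + (∑ t, ∑ s ∈ (B t).erase t, μ.real (ones X s ∩ ones X t))
        + ∑ t, ∫ ω, |μ[fun ω' => X t ω' - μ.real (ones X t) |
            ⨆ s ∈ Finset.univ \ B t, MeasurableSpace.comap (X s) inferInstance] ω| ∂μ) := by
  have hb1 : 0 ≤ ∑ t, ∑ s ∈ B t, μ.real (ones X t) * μ.real (ones X s) := by positivity
  have hb2 : 0 ≤ ∑ t, ∑ s ∈ (B t).erase t, μ.real (ones X s ∩ ones X t) := by positivity
  have hb3 : 0 ≤ ∑ t, ∫ ω, |μ[fun ω' => X t ω' - μ.real (ones X t) |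
      ⨆ s ∈ Finset.univ \ B t, MeasurableSpace.comap (X s) inferInstance] ω| ∂μ :=
    Finset.sum_nonneg fun _ _ => integral_nonneg fun _ => abs_nonneg _
  calc 2 * ∑ t, dependence μ (ones X) t (Finset.univ.erase t)
      ≤ 2 * ∑ t, (∫ ω, |μ[fun ω' => X t ω' - μ.real (ones X t) |
            ⨆ s ∈ Finset.univ \ B t, MeasurableSpace.comap (X s) inferInstance] ω| ∂μ
          + 2 * ∑ s ∈ (B t).erase t, μ.real (ones X s ∩ ones X t)
          + 2 * ∑ s ∈ B t, μ.real (ones X t) * μ.real (ones X s)) := by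
        gcongr with t
        exact dependence_ones_le hmX h01 (hB t)
    _ = 2 * ∑ t, ∫ ω, |μ[fun ω' => X t ω' - μ.real (ones X t) |
            ⨆ s ∈ Finset.univ \ B t, MeasurableSpace.comap (X s) inferInstance] ω| ∂μ
          + 4 * ∑ t, ∑ s ∈ (B t).erase t, μ.real (ones X s ∩ ones X t)
          + 4 * ∑ t, ∑ s ∈ B t, μ.real (ones X t) * μ.real (ones X s) := by
        rw [Finset.sum_add_distrib, Finset.sum_add_distrib, ← Finset.mul_sum, ← Finset.mul_sum]
        ring
    _ ≤ _ := by linarith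

end ZeroOne

/-- **Theorem (Statement 4, Chen–Stein method).** If `(X_t)_{t ∈ I}` and `(X'_t)_{t ∈ I}`
are `{0,1}`-valued processes with `X_t ~ X'_t` for each `t`, `(X'_t)` an independent
Bernoulli process, and `B_t ∋ t` are neighbourhoods, then
`‖ℒ((X_t)) - ℒ((X'_t))‖_TV ≤ 8 (b₁ + b₂ + b₃)`. -/
theorem chen_stein
    {Ωs I : Type} [MeasurableSpace Ωs] [Fintype I]
    (μ : Measure Ωs) [IsProbabilityMeasure μ]
    (X X' : I → Ωs → ℝ)
    (hmX : ∀ t, Measurable (X t)) (hmX' : ∀ t, Measurable (X' t))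
    (h01 : ∀ t ω, X t ω = 0 ∨ X t ω = 1) (h01' : ∀ t ω, X' t ω = 0 ∨ X' t ω = 1)
    (hlaw : ∀ t, Measure.map (X t) μ = Measure.map (X' t) μ)
    (hindep : iIndepFun X' μ)
    (B : I → Finset I) (hB : ∀ t, t ∈ B t) :
    tvDist (Measure.map (fun ω t => X t ω) μ) (Measure.map (fun ω t => X' t ω) μ)
      ≤ 8 *
        ((∑ t, ∑ s ∈ B t, (μ {ω | X t ω = 1}).toReal * (μ {ω | X s ω = 1}).toReal)
          + (∑ t, ∑ s ∈ (B t).erase t,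
              (μ ({ω | X s ω = 1} ∩ {ω | X t ω = 1})).toReal)
          + ∑ t, ∫ ω,
              |MeasureTheory.condExp
                  (⨆ s ∈ Finset.univ \ B t, MeasurableSpace.comap (X s) inferInstance) μ
                  (fun ω' => X t ω' - (μ {ω'' | X t ω'' = 1}).toReal) ω| ∂μ) := by
  have hp : ∀ t, μ.real (ones X' t) = μ.real (ones X t) := fun t => by
    have h := congrArg (fun ν => ν.real {1}) (hlaw t).symm
    rwa [map_measureReal_apply (hmX t) (measurableSet_singleton 1),
      map_measureReal_apply (hmX' t) (measurableSet_singleton 1)] at h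
  have hbern : ∀ T, μ.real (pattern (ones X') Finset.univ T)
      = bernoulliMass (fun t => μ.real (ones X t)) Finset.univ T := fun T => by
    rw [measureReal_pattern_of_iIndepSet (measurableSet_ones hmX')
      (iIndepSet_preimage_of_iIndepFun hindep hmX' fun _ => measurableSet_singleton 1)]
    simp only [hp]
  calc tvDist (μ.map fun ω t => X t ω) (μ.map fun ω t => X' t ω)
      ≤ ∑ T ∈ Finset.univ.powerset, |μ.real (pattern (ones X) Finset.univ T)
          - μ.real (pattern (ones X') Finset.univ T)| :=
        tvDist_map_le_sum_abs_pattern hmX hmX' h01 h01'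
    _ = ∑ T ∈ Finset.univ.powerset, |μ.real (pattern (ones X) Finset.univ T)
          - bernoulliMass (fun t => μ.real (ones X t)) Finset.univ T| := by
        simp only [hbern]
    _ ≤ 2 * ∑ t, dependence μ (ones X) t (Finset.univ.erase t) :=
        sum_abs_measureReal_pattern_sub_bernoulliMass_le (measurableSet_ones hmX) Finset.univ
    _ ≤ _ := two_mul_sum_dependence_ones_le hmX h01 B hB

end PaperFormal
end
end

section
/- Let t > 0, let h be a centered Gaussian random variable with variance v² > 0 and let ξ be an independent centered Gaussian random variable with variance w² > 0. Then E| P(h ≥ t − ξ | ξ) − P(h ≥ t) | ≤ 2·exp(−t²/(2w²)) + (w/(v√(2π)))·exp(−t²/(2v²))·(E[exp(2t|ξ|/v²)])^{1/2}. -/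
noncomputable section

namespace PaperFormal

open MeasureTheory ProbabilityTheory Filter Set
open scoped ENNReal NNReal Topology Classical


/-! Write `F a = P(h ≥ a)`, so that the integrand is `G(ξ)` with `G s = |F (t - s) - F t|`.
For `|s| ≥ t` use `G s ≤ 1`; this costs the Gaussian tail `P(|ξ| ≥ t) ≤ 2 exp(-t²/(2w²))`.
For `|s| < t`, the interval between `t - s` and `t` lies in `[t - |s|, ∞) ⊆ [0, ∞)`, where the
density `φ` of `h` is decreasing, so `G s ≤ |s| φ(t - |s|) ≤ |s| φ(t) exp(t|s|/v²)`.
Cauchy–Schwarz together with `E ξ² = w²` bounds the expectation of the latter. -/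

open Real

lemma gaussianReal_real_abs_ge_le (v : ℝ≥0) {t : ℝ} (ht : 0 ≤ t) :
    (gaussianReal 0 v).real {x | t ≤ |x|} ≤ 2 * exp (-t ^ 2 / (2 * v)) := by
  have hX : HasSubgaussianMGF id v (gaussianReal 0 v) :=
    ⟨integrable_exp_mul_gaussianReal, fun t ↦ by simp [mgf_id_gaussianReal]⟩
  have hunion : {x : ℝ | t ≤ |x|} = {x | t ≤ id x} ∪ {x | t ≤ (-id) x} := by
    ext x; simp [le_abs', or_comm, le_neg]
  calc (gaussianReal 0 v).real {x | t ≤ |x|}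
      ≤ (gaussianReal 0 v).real {x | t ≤ id x} + (gaussianReal 0 v).real {x | t ≤ (-id) x} :=
        hunion ▸ measureReal_union_le _ _
    _ ≤ _ := by linarith [hX.measure_ge_le ht, hX.neg.measure_ge_le ht]

lemma gaussianPDFReal_sub_le (v : ℝ≥0) (t r : ℝ) :
    gaussianPDFReal 0 v (t - r) ≤ gaussianPDFReal 0 v t * exp (t / v * r) := by
  have hexp : -(t - r) ^ 2 / (2 * v) = -t ^ 2 / (2 * v) + t / v * r - r ^ 2 / (2 * v) := by ring
  simp only [gaussianPDFReal, sub_zero, mul_assoc, ← exp_add, hexp]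
  gcongr
  exact sub_le_self _ (by positivity)

lemma gaussianPDFReal_antitoneOn (v : ℝ≥0) : AntitoneOn (gaussianPDFReal 0 v) (Ici 0) := by
  intro x hx y hy hxy
  simp only [gaussianPDFReal, sub_zero]
  gcongr

lemma measureReal_Ici_sub_Ici {μ : Measure ℝ} [IsFiniteMeasure μ] {a b : ℝ} (hab : a ≤ b) :
    μ.real (Ici a) - μ.real (Ici b) = μ.real (Ico a b) := by
  rw [← Ico_union_Ici_eq_Ici hab, measureReal_union _ measurableSet_Ici, add_sub_cancel_right]
  exact Set.disjoint_left.mpr fun x hx hx' ↦ (not_le.mpr hx.2) hx'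

lemma gaussianReal_real_Ico_le {v : ℝ≥0} (hv : v ≠ 0) {a b c : ℝ} (hc : 0 ≤ c) (hca : c ≤ a)
    (hab : a ≤ b) : (gaussianReal 0 v).real (Ico a b) ≤ (b - a) * gaussianPDFReal 0 v c := by
  rw [measureReal_def, gaussianReal_apply_eq_integral 0 hv, ENNReal.toReal_ofReal
    (setIntegral_nonneg measurableSet_Ico fun x _ ↦ gaussianPDFReal_nonneg 0 v x)]
  calc ∫ x in Ico a b, gaussianPDFReal 0 v x
      ≤ ∫ _ in Ico a b, gaussianPDFReal 0 v c :=
        setIntegral_mono_on (integrable_gaussianPDFReal 0 v).integrableOn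
          (integrableOn_const measure_Ico_lt_top.ne) measurableSet_Ico fun x hx ↦
            gaussianPDFReal_antitoneOn v hc (hc.trans (hca.trans hx.1)) (hca.trans hx.1)
    _ = (b - a) * gaussianPDFReal 0 v c := by
        rw [setIntegral_const, volume_real_Ico_of_le hab, smul_eq_mul]

lemma abs_gaussianReal_real_Ici_sub_le {v : ℝ≥0} (hv : v ≠ 0) {t s : ℝ} (hs : |s| ≤ t) :
    |(gaussianReal 0 v).real (Ici (t - s)) - (gaussianReal 0 v).real (Ici t)|
      ≤ |s| * gaussianPDFReal 0 v (t - |s|) := by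
  have h0 : 0 ≤ t - |s| := sub_nonneg.mpr hs
  rcases le_or_gt 0 s with hs0 | hs0
  · rw [abs_of_nonneg hs0] at h0 ⊢
    rw [measureReal_Ici_sub_Ici (sub_le_self t hs0), abs_of_nonneg measureReal_nonneg]
    simpa using gaussianReal_real_Ico_le hv h0 le_rfl (sub_le_self t hs0)
  · rw [abs_of_neg hs0] at h0 ⊢
    have hts : t ≤ t - s := by linarith
    rw [abs_sub_comm, measureReal_Ici_sub_Ici hts, abs_of_nonneg measureReal_nonneg]
    simpa using gaussianReal_real_Ico_le hv h0 (by linarith) hts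

lemma abs_gaussianReal_real_Ici_sub_le_indicator_add {v : ℝ≥0} (hv : v ≠ 0) (t s : ℝ) :
    |(gaussianReal 0 v).real (Ici (t - s)) - (gaussianReal 0 v).real (Ici t)|
      ≤ {x | t ≤ |x|}.indicator (1 : ℝ → ℝ) s
        + gaussianPDFReal 0 v t * (|s| * exp (t / v * |s|)) := by
  rcases le_or_gt t |s| with hts | hts
  · have hprob : |(gaussianReal 0 v).real (Ici (t - s)) - (gaussianReal 0 v).real (Ici t)| ≤ 1 :=
      abs_sub_le_of_nonneg_of_le measureReal_nonneg measureReal_le_one measureReal_nonneg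
        measureReal_le_one
    rw [indicator_of_mem (show s ∈ {x | t ≤ |x|} from hts), Pi.one_apply]
    have : 0 ≤ gaussianPDFReal 0 v t * (|s| * exp (t / v * |s|)) :=
      mul_nonneg (gaussianPDFReal_nonneg _ _ _) (by positivity)
    linarith
  · rw [indicator_of_notMem (show s ∉ {x | t ≤ |x|} from not_le.mpr hts), zero_add]
    calc _ ≤ |s| * gaussianPDFReal 0 v (t - |s|) := abs_gaussianReal_real_Ici_sub_le hv hts.le
      _ ≤ |s| * (gaussianPDFReal 0 v t * exp (t / v * |s|)) := by
          gcongr; exact gaussianPDFReal_sub_le v t |s|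
      _ = _ := by ring

lemma integral_sq_gaussianReal (w : ℝ≥0) : ∫ x, x ^ 2 ∂gaussianReal 0 w = w := by
  rw [← variance_of_integral_eq_zero aemeasurable_id' integral_id_gaussianReal,
    variance_fun_id_gaussianReal]

lemma memLp_abs_gaussianReal (w : ℝ≥0) :
    MemLp (fun x : ℝ ↦ |x|) 2 (gaussianReal 0 w) :=
  (memLp_id_gaussianReal 2).abs

lemma memLp_exp_mul_abs_gaussianReal (w : ℝ≥0) (c : ℝ) :
    MemLp (fun x ↦ exp (c * |x|)) 2 (gaussianReal 0 w) := by
  rw [memLp_two_iff_integrable_sq (by fun_prop)]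
  simpa only [← exp_nat_mul, Nat.cast_ofNat, ← mul_assoc] using
    integrable_exp_mul_abs (X := fun x ↦ x) (t := 2 * c)
      (integrable_exp_mul_gaussianReal _) (integrable_exp_mul_gaussianReal _)

lemma integral_abs_mul_exp_mul_abs_gaussianReal_le (w : ℝ≥0) (c : ℝ) :
    ∫ x, |x| * exp (c * |x|) ∂gaussianReal 0 w
      ≤ √w * (∫ x, exp (2 * c * |x|) ∂gaussianReal 0 w) ^ (1 / 2 : ℝ) := by
  have hCS := integral_mul_le_Lp_mul_Lq_of_nonneg Real.HolderConjugate.two_two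
    (ae_of_all _ fun x ↦ abs_nonneg x) (ae_of_all _ fun x ↦ (exp_pos _).le)
    (by simpa using memLp_abs_gaussianReal w)
    (by simpa using memLp_exp_mul_abs_gaussianReal w c)
  simp only [rpow_two, sq_abs, ← exp_nat_mul, Nat.cast_ofNat, ← mul_assoc,
    integral_sq_gaussianReal] at hCS
  rwa [sqrt_eq_rpow]

theorem integral_abs_gaussianReal_real_Ici_sub_le {v : ℝ≥0} (hv : v ≠ 0) (w : ℝ≥0) {t : ℝ}
    (ht : 0 ≤ t) :
    ∫ s, |(gaussianReal 0 v).real (Ici (t - s)) - (gaussianReal 0 v).real (Ici t)|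
        ∂gaussianReal 0 w
      ≤ 2 * exp (-t ^ 2 / (2 * w)) + gaussianPDFReal 0 v t *
          (√w * (∫ s, exp (2 * (t / v) * |s|) ∂gaussianReal 0 w) ^ (1 / 2 : ℝ)) := by
  have hS : MeasurableSet {x : ℝ | t ≤ |x|} := measurableSet_le measurable_const measurable_abs
  have hind : Integrable ({x : ℝ | t ≤ |x|}.indicator (1 : ℝ → ℝ)) (gaussianReal 0 w) :=
    (integrable_const 1).indicator hS
  have hmul : Integrable (fun s ↦ |s| * exp (t / v * |s|)) (gaussianReal 0 w) :=
    (memLp_abs_gaussianReal w).integrable_mul (memLp_exp_mul_abs_gaussianReal w _)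
  calc _ ≤ ∫ s, ({x : ℝ | t ≤ |x|}.indicator (1 : ℝ → ℝ) s
          + gaussianPDFReal 0 v t * (|s| * exp (t / v * |s|))) ∂gaussianReal 0 w :=
        integral_mono_of_nonneg (ae_of_all _ fun _ ↦ abs_nonneg _) (hind.add (hmul.const_mul _) :)
          (ae_of_all _ (abs_gaussianReal_real_Ici_sub_le_indicator_add hv t))
    _ = (gaussianReal 0 w).real {x | t ≤ |x|}
          + gaussianPDFReal 0 v t * ∫ s, |s| * exp (t / v * |s|) ∂gaussianReal 0 w := by
        rw [integral_add hind (hmul.const_mul _), integral_const_mul,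
          integral_indicator_one hS]
    _ ≤ _ := by
        gcongr
        · exact gaussianReal_real_abs_ge_le w ht
        · exact gaussianPDFReal_nonneg _ _ _
        · exact integral_abs_mul_exp_mul_abs_gaussianReal_le w _

theorem gaussian_shift_estimate_general
    {Ωs : Type} [MeasurableSpace Ωs] (P : Measure Ωs)
    (t v w : ℝ) (ht : 0 < t) (hv : 0 < v) (hw : 0 < w)
    (h ξ : Ωs → ℝ) (hmh : Measurable h) (hmξ : Measurable ξ)
    (hlawh : Measure.map h P = gaussianReal 0 (Real.toNNReal (v ^ 2)))
    (hlawξ : Measure.map ξ P = gaussianReal 0 (Real.toNNReal (w ^ 2))) :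
    (∫ ω, |(P {ω' | t - ξ ω ≤ h ω'}).toReal - (P {ω' | t ≤ h ω'}).toReal| ∂P)
      ≤ 2 * Real.exp (-t ^ 2 / (2 * w ^ 2))
        + w / (v * Real.sqrt (2 * Real.pi)) * Real.exp (-t ^ 2 / (2 * v ^ 2))
          * (∫ ω, Real.exp (2 * t * |ξ ω| / v ^ 2) ∂P) ^ ((1 : ℝ) / 2) := by
  set μ := gaussianReal 0 (Real.toNNReal (v ^ 2))
  have hv₀ : Real.toNNReal (v ^ 2) ≠ 0 := by simpa using hv.ne'
  have hlaw : ∀ a, (P {ω' | a ≤ h ω'}).toReal = μ.real (Ici a) := fun a ↦ by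
    rw [measureReal_def, ← hlawh, Measure.map_apply hmh measurableSet_Ici]; rfl
  have hmeas : Measurable fun s ↦ |μ.real (Ici (t - s)) - μ.real (Ici t)| :=
    ((Monotone.measurable fun _ _ hab ↦
      measureReal_mono (Ici_subset_Ici.mpr (by linarith))).sub_const _).abs
  calc _ = ∫ s, |μ.real (Ici (t - s)) - μ.real (Ici t)|
        ∂gaussianReal 0 (Real.toNNReal (w ^ 2)) := by
        simp_rw [hlaw]
        rw [← hlawξ, integral_map hmξ.aemeasurable hmeas.aestronglyMeasurable]
    _ ≤ _ := integral_abs_gaussianReal_real_Ici_sub_le hv₀ _ ht.le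
    _ = _ := by
        rw [← hlawξ, integral_map hmξ.aemeasurable (by fun_prop)]
        have hsqrt : √(2 * π * v ^ 2) = v * √(2 * π) := by
          rw [sqrt_mul (by positivity), sqrt_sq hv.le, mul_comm]
        have hexp : ∀ x, 2 * (t / v ^ 2) * |x| = 2 * t * |x| / v ^ 2 := fun x ↦ by ring
        simp only [gaussianPDFReal, Real.coe_toNNReal _ (sq_nonneg _), sqrt_sq hw.le, sub_zero,
          hsqrt, hexp]
        ring

/-- **Theorem (Statement 16).** If `h ~ N(0, v²)` and `ξ ~ N(0, w²)` are independent and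
`t > 0`, then `E|P(h ≥ t - ξ | ξ) - P(h ≥ t)|
  ≤ 2 exp(-t²/(2w²)) + (w/(v √(2π))) exp(-t²/(2v²)) (E[exp(2t|ξ|/v²)])^{1/2}`. -/
theorem gaussian_shift_estimate
    {Ωs : Type} [MeasurableSpace Ωs] (P : Measure Ωs) [IsProbabilityMeasure P]
    (t v w : ℝ) (ht : 0 < t) (hv : 0 < v) (hw : 0 < w)
    (h ξ : Ωs → ℝ) (hmh : Measurable h) (hmξ : Measurable ξ)
    (hlawh : Measure.map h P = gaussianReal 0 (Real.toNNReal (v ^ 2)))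
    (hlawξ : Measure.map ξ P = gaussianReal 0 (Real.toNNReal (w ^ 2)))
    (hindep : IndepFun h ξ P) :
    (∫ ω, |(P {ω' | t - ξ ω ≤ h ω'}).toReal - (P {ω' | t ≤ h ω'}).toReal| ∂P)
      ≤ 2 * Real.exp (-t ^ 2 / (2 * w ^ 2))
        + w / (v * Real.sqrt (2 * Real.pi)) * Real.exp (-t ^ 2 / (2 * v ^ 2))
          * (∫ ω, Real.exp (2 * t * |ξ ω| / v ^ 2) ∂P) ^ ((1 : ℝ) / 2) :=
  gaussian_shift_estimate_general P t v w ht hv hw h ξ hmh hmξ hlawh hlawξ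

end PaperFormal
end
end
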